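/- Let G be an ample groupoid. G is minimal if and only if for every nonempty compact open subset V of the unit space G⁰, the characteristic function 1_V generates A_B(G) as a two-sided ideal. -/

import Mathlib

/-- An ample groupoid: a topological groupoid (partially defined continuous
composition, continuous inversion), which is étale (source and range are local
homeomorphisms), whose unit space is locally compact Hausdorff and totally
disconnected, and which has a base of compact open bisections. -/
structure AmpleGroupoid (G : Type*) [TopologicalSpace G] where
  src : G → G
  rng : G → G
  inv : G → G
  comp : (a b : G) → src a = rng b → G
  src_comp : ∀ a b h, src (comp a b h) = src b
  rng_comp : ∀ a b h, rng (comp a b h) = rng a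
  src_src : ∀ a, src (src a) = src a
  rng_src : ∀ a, rng (src a) = src a
  src_rng : ∀ a, src (rng a) = rng a
  rng_rng : ∀ a, rng (rng a) = rng a
  comp_assoc : ∀ a b c h1 h2 h3 h4,
    comp (comp a b h1) c h2 = comp a (comp b c h3) h4
  unit_comp : ∀ a b (h : src a = rng b), rng a = a → comp a b h = b
  comp_unit : ∀ a b (h : src a = rng b), src b = b → comp a b h = a
  src_inv : ∀ a, src (inv a) = rng a
  rng_inv : ∀ a, rng (inv a) = src a
  comp_inv : ∀ a (h : src a = rng (inv a)), comp a (inv a) h = rng a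
  inv_comp : ∀ a (h : src (inv a) = rng a), comp (inv a) a h = src a
  continuous_inv : Continuous inv
  continuous_comp :
    Continuous fun p : {q : G × G // src q.1 = rng q.2} => comp p.1.1 p.1.2 p.2
  etale_src : IsLocalHomeomorph src
  etale_rng : IsLocalHomeomorph rng
  t2_units : T2Space {x : G // src x = x}
  locallyCompact_units : LocallyCompactSpace {x : G // src x = x}
  totallyDisconnected_units : TotallyDisconnectedSpace {x : G // src x = x}
  base : TopologicalSpace.IsTopologicalBasis
    {U : Set G | IsCompact U ∧ IsOpen U ∧ Set.InjOn src U ∧ Set.InjOn rng U}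

namespace AmpleGroupoid

variable {G : Type*} [TopologicalSpace G] (gd : AmpleGroupoid G)

/-- The set product `UV` of two subsets of the groupoid: all composable products. -/
def setProd (U V : Set G) : Set G :=
  {x | ∃ a ∈ U, ∃ b ∈ V, ∃ h : gd.src a = gd.rng b, gd.comp a b h = x}

/-- The unit space `G⁰`. -/
def units : Set G := {x | gd.src x = x}

/-- A bisection: a subset on which both source and range are injective. -/
def IsBisection (U : Set G) : Prop := Set.InjOn gd.src U ∧ Set.InjOn gd.rng U

/-- The set of units with trivial isotropy group. -/
def trivIso : Set G :=
  {u | gd.src u = u ∧ ∀ γ : G, gd.src γ = u → gd.rng γ = u → γ = u}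

/-- Minimality: no nontrivial (relatively) open invariant subsets of the unit space. -/
def Minimal : Prop :=
  ∀ D : Set G, (∃ O : Set G, IsOpen O ∧ D = O ∩ gd.units) →
    (∀ a : G, gd.src a ∈ D → gd.rng a ∈ D) → D = ∅ ∨ D = gd.units

/-- Effectiveness: the interior of the isotropy subgroupoid is the unit space. -/
def Effective : Prop := interior {x : G | gd.src x = gd.rng x} = gd.units

/-- A compact open subset. -/
def CO (U : Set G) : Prop := IsCompact U ∧ IsOpen U

section AuxLemmas

lemma units_eq_range : gd.units = Set.range gd.src := by
  ext x
  constructor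
  · intro hx; exact ⟨x, hx⟩
  · rintro ⟨y, rfl⟩; exact gd.src_src y

lemma isOpen_units : IsOpen gd.units := by
  rw [gd.units_eq_range]
  exact gd.etale_src.isOpenMap.isOpen_range

lemma rng_unit {u : G} (h : gd.src u = u) : gd.rng u = u := by
  conv_lhs => rw [← h]
  rw [gd.rng_src, h]

lemma comp_congr {a a' b b' : G} (ha : a = a') (hb : b = b')
    (h : gd.src a = gd.rng b) (h' : gd.src a' = gd.rng b') :
    gd.comp a b h = gd.comp a' b' h' := by subst ha; subst hb; rfl

lemma inv_inv (a : G) : gd.inv (gd.inv a) = a := by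
  have h3 : gd.src (gd.inv a) = gd.rng a := gd.src_inv a
  have h1 : gd.src (gd.inv (gd.inv a)) = gd.rng (gd.inv a) := gd.src_inv _
  have e1 : gd.comp (gd.inv (gd.inv a)) (gd.inv a) h1 = gd.src (gd.inv a) :=
    gd.inv_comp (gd.inv a) h1
  have h2 : gd.src (gd.comp (gd.inv (gd.inv a)) (gd.inv a) h1) = gd.rng a := by
    rw [gd.src_comp]; exact h3
  have h4 : gd.src (gd.inv (gd.inv a)) = gd.rng (gd.comp (gd.inv a) a h3) := by
    rw [gd.rng_comp, h1, gd.rng_inv]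
  have assoc := gd.comp_assoc (gd.inv (gd.inv a)) (gd.inv a) a h1 h2 h3 h4
  have lhs : gd.comp (gd.comp (gd.inv (gd.inv a)) (gd.inv a) h1) a h2 = a := by
    have hx : gd.comp (gd.inv (gd.inv a)) (gd.inv a) h1 = gd.rng a := e1.trans h3
    have h2' : gd.src (gd.rng a) = gd.rng a := gd.src_rng a
    rw [gd.comp_congr hx rfl h2 h2']
    exact gd.unit_comp _ _ h2' (gd.rng_rng a)
  have rhs : gd.comp (gd.inv (gd.inv a)) (gd.comp (gd.inv a) a h3) h4
      = gd.inv (gd.inv a) := by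
    have hy : gd.comp (gd.inv a) a h3 = gd.src a := gd.inv_comp a h3
    have h4' : gd.src (gd.inv (gd.inv a)) = gd.rng (gd.src a) := by
      rw [gd.rng_src, h1, gd.rng_inv]
    rw [gd.comp_congr rfl hy h4 h4']
    exact gd.comp_unit _ _ h4' (gd.src_src a)
  exact (rhs.symm.trans (assoc.symm.trans lhs))

lemma setProd_empty (A : Set G) : gd.setProd A ∅ = ∅ := by
  ext x; simp [setProd]

lemma setProd_rngimg (U : Set G) (hU : Set.InjOn gd.src U) :
    gd.setProd U (gd.inv '' U) = gd.rng '' U := by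
  ext x
  constructor
  · rintro ⟨a, ha, b, ⟨b', hb', rfl⟩, h, rfl⟩
    have heq : gd.src a = gd.src b' := by rw [h, gd.rng_inv]
    have hab : a = b' := hU ha hb' heq
    subst hab
    exact ⟨a, ha, (gd.comp_inv a h).symm⟩
  · rintro ⟨a, ha, rfl⟩
    have h : gd.src a = gd.rng (gd.inv a) := (gd.rng_inv a).symm
    exact ⟨a, ha, gd.inv a, ⟨a, ha, rfl⟩, h, gd.comp_inv a h⟩

lemma setProd_subunits_right (B V : Set G) (hV : V ⊆ gd.units)
    (hBV : ∀ b ∈ B, gd.src b ∈ V) : gd.setProd B V = B := by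
  ext x
  constructor
  · rintro ⟨a, ha, b, hb, h, rfl⟩
    rwa [gd.comp_unit a b h (hV hb)]
  · intro hx
    exact ⟨x, hx, gd.src x, hBV x hx, (gd.rng_src x).symm,
      gd.comp_unit _ _ _ (gd.src_src x)⟩

lemma setProd_units_left (K U : Set G) (hK : K ⊆ gd.units)
    (hU : ∀ b ∈ U, gd.rng b ∈ K) : gd.setProd K U = U := by
  ext x
  constructor
  · rintro ⟨a, ha, b, hb, h, rfl⟩
    rwa [gd.unit_comp a b h (gd.rng_unit (hK ha))]
  · intro hx
    exact ⟨gd.rng x, hU x hx, x, hx, gd.src_rng x,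
      gd.unit_comp _ _ _ (gd.rng_rng x)⟩

lemma setProd_units_both (K R : Set G) (hK : K ⊆ gd.units)
    (hR : R ⊆ gd.units) (hKR : K ⊆ R) : gd.setProd K R = K := by
  ext x
  constructor
  · rintro ⟨a, ha, b, hb, h, rfl⟩
    rwa [gd.comp_unit a b h (hR hb)]
  · intro hx
    have hx' : gd.src x = x := hK hx
    exact ⟨x, hx, x, hKR hx, by rw [hx', gd.rng_unit hx'],
      gd.comp_unit _ _ _ hx'⟩

set_option linter.unusedSectionVars false in
lemma finset_union_mem {ι : Type*} (I : Set (Set G)) (hemp : ∅ ∈ I)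
    (hunion : ∀ A B : Set G, A ∈ I → B ∈ I → A ∪ B ∈ I) (t : Finset ι)
    (f : ι → Set G) (hf : ∀ i ∈ t, f i ∈ I) : (⋃ i ∈ t, f i) ∈ I := by
  classical
  induction t using Finset.induction_on with
  | empty => simpa using hemp
  | insert a s hni ih =>
    rw [Finset.set_biUnion_insert]
    exact hunion _ _ (hf _ (Finset.mem_insert_self _ _))
      (ih fun i hi => hf i (Finset.mem_insert_of_mem hi))

lemma exists_bisection_cover {U : Set G} (hUc : IsCompact U) (hUo : IsOpen U) :
    ∃ (f : G → Set G) (t : Finset G),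
      (∀ x, f x ⊆ U ∧ IsCompact (f x) ∧ IsOpen (f x) ∧
        Set.InjOn gd.src (f x) ∧ Set.InjOn gd.rng (f x)) ∧
      U = ⋃ x ∈ t, f x := by
  have hch : ∀ x : G, ∃ B : Set G, B ⊆ U ∧ IsCompact B ∧ IsOpen B ∧
      Set.InjOn gd.src B ∧ Set.InjOn gd.rng B ∧ (x ∈ U → x ∈ B) := by
    intro x
    by_cases hx : x ∈ U
    · obtain ⟨B, hB, hxB, hBU⟩ := gd.base.exists_subset_of_mem_open hx hUo
      exact ⟨B, hBU, hB.1, hB.2.1, hB.2.2.1, hB.2.2.2, fun _ => hxB⟩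
    · exact ⟨∅, Set.empty_subset _, isCompact_empty, isOpen_empty,
        Set.injOn_empty _, Set.injOn_empty _, fun h => absurd h hx⟩
  choose f hfU hfc hfo hfs hfr hfx using hch
  have hcover : U ⊆ ⋃ x : G, f x := fun x hx => Set.mem_iUnion.mpr ⟨x, hfx x hx⟩
  obtain ⟨t, ht⟩ := hUc.elim_finite_subcover f hfo hcover
  exact ⟨f, t, fun x => ⟨hfU x, hfc x, hfo x, hfs x, hfr x⟩,
    Set.Subset.antisymm ht (Set.iUnion₂_subset fun x _ => hfU x)⟩

end AuxLemmas
end AmpleGroupoid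

open AmpleGroupoid

/-- An ample groupoid `G` is minimal if and only if, for every nonempty compact
open subset `V` of the unit space `G⁰`, the characteristic function `1_V`
generates the Boolean Steinberg algebra `A_B(G)` as a two-sided ideal.  With
`A_B(G)` identified with the compact open subsets of `G` (union as addition,
set product as multiplication), this says: every collection `I` of sets that
contains `V`, is closed under unions, and absorbs set products with compact open
sets on either side, must contain every compact open subset of `G`. -/
theorem stmt17 {G : Type*} [TopologicalSpace G] (gd : AmpleGroupoid G) :
    gd.Minimal ↔
      ∀ V : Set G, V ⊆ gd.units → V ≠ ∅ → IsCompact V → IsOpen V →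
        ∀ I : Set (Set G), V ∈ I →
          (∀ A B : Set G, A ∈ I → B ∈ I → A ∪ B ∈ I) →
          (∀ A B : Set G, A ∈ I → CO B →
            gd.setProd A B ∈ I ∧ gd.setProd B A ∈ I) →
          ∀ U : Set G, CO U → U ∈ I := by
  constructor
  · -- forward: minimal ⟹ ideal property
    intro hmin V hVu hVne hVc hVo I hVI hIunion hIabs
    have hsrc_cont : Continuous gd.src := gd.etale_src.continuous
    have hrng_cont : Continuous gd.rng := gd.etale_rng.continuous
    have hrng_open : IsOpenMap gd.rng := gd.etale_rng.isOpenMap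
    set D : Set G := gd.rng '' (gd.src ⁻¹' V) with hD
    have hDunits : D ⊆ gd.units := by rintro _ ⟨x, -, rfl⟩; exact gd.src_rng x
    have hDeq : D = gd.units := by
      have hinv : ∀ a : G, gd.src a ∈ D → gd.rng a ∈ D := by
        intro a ha
        obtain ⟨γ, hγ, hrγ⟩ := ha
        have h : gd.src a = gd.rng γ := hrγ.symm
        refine ⟨gd.comp a γ h, ?_, gd.rng_comp a γ h⟩
        show gd.src (gd.comp a γ h) ∈ V
        rw [gd.src_comp]; exact hγ
      rcases hmin D ⟨D, hrng_open _ (hVo.preimage hsrc_cont),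
          (Set.inter_eq_left.mpr hDunits).symm⟩ hinv with h | h
      · exfalso
        obtain ⟨v, hv⟩ := Set.nonempty_iff_ne_empty.mpr hVne
        have hvu : gd.src v = v := hVu hv
        have : v ∈ D := ⟨v, by show gd.src v ∈ V; rw [hvu]; exact hv, gd.rng_unit hvu⟩
        rw [h] at this
        exact this
      · exact h
    have hemptyI : ∅ ∈ I := by
      have h := (hIabs V ∅ hVI ⟨isCompact_empty, isOpen_empty⟩).1
      rwa [gd.setProd_empty] at h
    -- key: compact open subsets of the unit space lie in I
    have keyK : ∀ K : Set G, IsCompact K → IsOpen K → K ⊆ gd.units → K ∈ I := by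
      intro K hKc hKo hKu
      have hch : ∀ u : G, ∃ B : Set G, IsCompact B ∧ IsOpen B ∧
          Set.InjOn gd.src B ∧ (∀ b ∈ B, gd.src b ∈ V) ∧
          (u ∈ K → u ∈ gd.rng '' B) := by
        intro u
        by_cases hu : u ∈ K
        · have huD : u ∈ D := by rw [hDeq]; exact hKu hu
          obtain ⟨γ, hγV, hγr⟩ := huD
          obtain ⟨B, hB, hγB, hBs⟩ := gd.base.exists_subset_of_mem_open
            (show γ ∈ gd.src ⁻¹' V from hγV) (hVo.preimage hsrc_cont)
          exact ⟨B, hB.1, hB.2.1, hB.2.2.1, fun b hb => hBs hb,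
            fun _ => ⟨γ, hγB, hγr⟩⟩
        · exact ⟨∅, isCompact_empty, isOpen_empty, Set.injOn_empty _,
            fun b hb => absurd hb (Set.notMem_empty b), fun h => absurd h hu⟩
      choose B hBc hBo hBs hBV hBr using hch
      have hRmem : ∀ u : G, gd.rng '' (B u) ∈ I := by
        intro u
        have hBI : B u ∈ I := by
          have h := (hIabs V (B u) hVI ⟨hBc u, hBo u⟩).2
          rwa [gd.setProd_subunits_right (B u) V hVu (hBV u)] at h
        have hinveq : gd.inv '' (B u) = gd.inv ⁻¹' (B u) := by
          ext x
          constructor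
          · rintro ⟨y, hy, rfl⟩
            show gd.inv (gd.inv y) ∈ B u
            rwa [gd.inv_inv]
          · intro hx
            exact ⟨gd.inv x, hx, gd.inv_inv x⟩
        have hinvCO : CO (gd.inv '' (B u)) := by
          refine ⟨(hBc u).image gd.continuous_inv, ?_⟩
          rw [hinveq]
          exact (hBo u).preimage gd.continuous_inv
        have h := (hIabs (B u) (gd.inv '' (B u)) hBI hinvCO).1
        rwa [gd.setProd_rngimg (B u) (hBs u)] at h
      have hRopen : ∀ u : G, IsOpen (gd.rng '' (B u)) := fun u => hrng_open _ (hBo u)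
      have hcover : K ⊆ ⋃ u : G, gd.rng '' (B u) :=
        fun u hu => Set.mem_iUnion.mpr ⟨u, hBr u hu⟩
      obtain ⟨t, ht⟩ := hKc.elim_finite_subcover _ hRopen hcover
      have hRI : (⋃ u ∈ t, gd.rng '' (B u)) ∈ I :=
        finset_union_mem I hemptyI hIunion t _ (fun i _ => hRmem i)
      have hRu : (⋃ u ∈ t, gd.rng '' (B u)) ⊆ gd.units := by
        rintro x hx
        simp only [Set.mem_iUnion] at hx
        obtain ⟨i, -, y, -, rfl⟩ := hx
        exact gd.src_rng y
      have h := (hIabs (⋃ u ∈ t, gd.rng '' (B u)) K hRI ⟨hKc, hKo⟩).2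
      rwa [gd.setProd_units_both K _ hKu hRu ht] at h
    intro U hU
    obtain ⟨f, t, hf, hUeq⟩ := gd.exists_bisection_cover hU.1 hU.2
    rw [hUeq]
    apply finset_union_mem I hemptyI hIunion
    intro i _
    obtain ⟨hfU, hfc, hfo, hfs, hfr⟩ := hf i
    have hKi : gd.rng '' (f i) ∈ I :=
      keyK _ (hfc.image hrng_cont) (hrng_open _ hfo)
        (by rintro _ ⟨y, -, rfl⟩; exact gd.src_rng y)
    have h := (hIabs (gd.rng '' (f i)) (f i) hKi ⟨hfc, hfo⟩).1
    rwa [gd.setProd_units_left _ _ (by rintro _ ⟨y, -, rfl⟩; exact gd.src_rng y)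
      (fun b hb => Set.mem_image_of_mem gd.rng hb)] at h
  · -- backward: ideal property ⟹ minimal
    intro hid D hDform hDinv
    obtain ⟨O, hO, rfl⟩ := hDform
    by_cases hne : O ∩ gd.units = ∅
    · exact Or.inl hne
    · right
      obtain ⟨v, hv⟩ := Set.nonempty_iff_ne_empty.mpr hne
      have hDopen : IsOpen (O ∩ gd.units) := hO.inter gd.isOpen_units
      obtain ⟨V, hVb, hvV, hVD⟩ := gd.base.exists_subset_of_mem_open hv hDopen
      set I : Set (Set G) := {A | gd.rng '' A ⊆ O ∩ gd.units} with hI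
      have hVu : V ⊆ gd.units := fun x hx => (hVD hx).2
      have hVI : V ∈ I := by
        rintro _ ⟨x, hx, rfl⟩
        rw [gd.rng_unit (hVu hx)]
        exact hVD hx
      have hVne : V ≠ ∅ := Set.nonempty_iff_ne_empty.mp ⟨v, hvV⟩
      have hall := hid V hVu hVne hVb.1 hVb.2.1 I hVI
        (fun A B hA hB => by
          show gd.rng '' (A ∪ B) ⊆ O ∩ gd.units
          rw [Set.image_union]
          exact Set.union_subset hA hB)
        (fun A B hA hB => by
          constructor
          · rintro _ ⟨_, ⟨a, ha, b, hb, h, rfl⟩, rfl⟩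
            rw [gd.rng_comp]
            exact hA ⟨a, ha, rfl⟩
          · rintro _ ⟨_, ⟨b, hb, a, ha, h, rfl⟩, rfl⟩
            rw [gd.rng_comp]
            have hsb : gd.src b ∈ O ∩ gd.units := by
              rw [h]
              exact hA ⟨a, ha, rfl⟩
            exact hDinv b hsb)
      refine Set.Subset.antisymm Set.inter_subset_right ?_
      intro u hu
      obtain ⟨W, hWb, huW, -⟩ :=
        gd.base.exists_subset_of_mem_open (Set.mem_univ u) isOpen_univ
      have h : gd.rng u ∈ O ∩ gd.units :=
        (hall W ⟨hWb.1, hWb.2.1⟩) ⟨u, huW, rfl⟩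
      rwa [gd.rng_unit hu] at h
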